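/- arXiv:2009.08570 — 5 statements merged into one kernel-verified Lean document; each statement's English description precedes it below -/
import Mathlib

section
/- Let p, q, r, s be four distinct points in ℝ² such that p, q lie on a line L, r, s lie on a line L' parallel to and distinct from L. Then among the four segments pr, ps, qr, qs, some two of them intersect at a point that is not a common endpoint. -/
/-- Two closed segments cross if they share a point that is not a common endpoint. -/
def SegCross (a b a' b' : ℝ × ℝ) : Prop :=
  ∃ x : ℝ × ℝ, x ∈ segment ℝ a b ∧ x ∈ segment ℝ a' b' ∧
    ¬((x = a ∨ x = b) ∧ (x = a' ∨ x = b'))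

lemma cross_aux (a b c d : ℝ × ℝ) (u : ℝ) (hu0 : 0 < u) (hu1 : u < 1)
    (hcd : c ≠ d) (heq : (1-u) • a + u • b = (1-u) • c + u • d) : SegCross a b c d := by
  refine ⟨(1-u) • c + u • d, ?_, ?_, ?_⟩
  · exact heq ▸ ⟨1-u, u, by linarith, hu0.le, by ring, rfl⟩
  · exact ⟨1-u, u, by linarith, hu0.le, by ring, rfl⟩
  · rintro ⟨-, h | h⟩
    · have h2 : u • (d - c) = 0 := by
        have : (1-u) • c + u • d - c = 0 := by rw [h]; simp
        rw [← this]; module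
      rcases smul_eq_zero.mp h2 with h3 | h3
      · linarith
      · exact hcd (sub_eq_zero.mp h3).symm
    · have h2 : (1-u) • (c - d) = 0 := by
        have : (1-u) • c + u • d - d = 0 := by rw [h]; simp
        rw [← this]; module
      rcases smul_eq_zero.mp h2 with h3 | h3
      · linarith
      · exact hcd (sub_eq_zero.mp h3)

theorem trapezoid_segments_cross (p q r s : ℝ × ℝ)
    (hpq : p ≠ q) (hrs : r ≠ s) (hpr : p ≠ r) (hps : p ≠ s) (hqr : q ≠ r) (hqs : q ≠ s)
    (hpar : ∃ t : ℝ, s - r = t • (q - p))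
    (hdistinct : r ∉ affineSpan ℝ ({p, q} : Set (ℝ × ℝ))) :
    ∃ e₁ e₂ : (ℝ × ℝ) × (ℝ × ℝ),
      e₁ ∈ [(p, r), (p, s), (q, r), (q, s)] ∧
      e₂ ∈ [(p, r), (p, s), (q, r), (q, s)] ∧ e₁ ≠ e₂ ∧
      SegCross e₁.1 e₁.2 e₂.1 e₂.2 := by
  obtain ⟨t, ht⟩ := hpar
  have ht0 : t ≠ 0 := by
    rintro rfl
    have : s - r = 0 := by rw [ht]; simp
    exact hrs (sub_eq_zero.mp this).symm
  rcases lt_or_gt_of_ne ht0 with htn | htp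
  · -- t < 0 : segments pr and qs cross
    refine ⟨(p, r), (q, s), by simp, by simp, by simp [hpq], ?_⟩
    set v : ℝ := 1 / (1 - t) with hv
    have h1t : (0:ℝ) < 1 - t := by linarith
    have hv0 : 0 < v := by positivity
    have hv1 : v < 1 := by rw [hv, div_lt_one h1t]; linarith
    refine cross_aux p r q s v hv0 hv1 hqs ?_
    have hs : s = r + t • (q - p) := by rw [← ht]; ring_nf
    have hvt : v * (1 - t) = 1 := one_div_mul_cancel h1t.ne'
    rw [hs]
    have : ((1-v) - (-(v*t))) • (p - q) = 0 := by
      have : (1-v) - (-(v*t)) = 0 := by nlinarith [hvt]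
      rw [this, zero_smul]
    rw [← sub_eq_zero]
    rw [← sub_eq_zero] at this
    · linear_combination (norm := module) this
  · -- t > 0 : segments ps and qr cross
    refine ⟨(p, s), (q, r), by simp, by simp, by simp [hpq], ?_⟩
    set u : ℝ := 1 / (1 + t) with hu
    have h1t : (0:ℝ) < 1 + t := by linarith
    have hu0 : 0 < u := by positivity
    have hu1 : u < 1 := by rw [hu, div_lt_one h1t]; linarith
    refine cross_aux p s q r u hu0 hu1 hqr ?_
    have hs : s = r + t • (q - p) := by rw [← ht]; ring_nf
    have hut : u * (1 + t) = 1 := one_div_mul_cancel h1t.ne'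
    rw [hs]
    have key : ((1-u) - u*t) • (p - q) = 0 := by
      have : (1-u) - u*t = 0 := by nlinarith [hut]
      rw [this, zero_smul]
    linear_combination (norm := module) key
end

section
/- Suppose P is a convex lattice polygon containing distinct lattice points p and q such that: p and q are not visible to each other; every lattice point of P other than q is visible from p; every lattice point of P other than p is visible from q; and no two of these lines of sight cross. Then the line L through p and q contains exactly 3 lattice points of P, and every other line parallel to L contains at most 1 lattice point of P. -/
/-!
Parametrize the line `L` through `p` and `q` so that `p` and `q` sit at `0` and `1`. The point
reflection `r ↦ p + q - r` preserves lattice points, so a lattice point of `P` at `t ∈ (0, 1)` gives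
one at `1 - t`, and visibility from `p` forces `t = 1 / 2`; such a point exists because `p` and `q`
do not see each other. This midpoint blocks the view from `q` (resp. `p`) of any lattice point of
`L` before `p` (resp. beyond `q`). On a parallel line, two lattice points `r`, `s` with `s - r` a
positive multiple of `q - p` would make the sightlines `p s` and `q r` cross.
-/
/-- The canonical embedding of `ℤ × ℤ` into `ℝ × ℝ`. -/
noncomputable def latticeCast (p : ℤ × ℤ) : ℝ × ℝ := ((p.1 : ℝ), (p.2 : ℝ))

/-- Two lattice points are visible to one another if the closed segment
joining them contains no lattice point besides the endpoints. -/
def Visible (p q : ℤ × ℤ) : Prop :=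
  ∀ r : ℤ × ℤ, latticeCast r ∈ segment ℝ (latticeCast p) (latticeCast q) → r = p ∨ r = q

/-- The line through `w` with direction `v`. -/
def lineThrough (w v : ℝ × ℝ) : Set (ℝ × ℝ) := {z | ∃ t : ℝ, z = w + t • v}

open Set AffineMap

lemma latticeCast_injective : Function.Injective latticeCast := fun _ _ h =>
  Prod.ext (Int.cast_injective (congrArg Prod.fst h)) (Int.cast_injective (congrArg Prod.snd h))

lemma latticeCast_add_sub (a b c : ℤ × ℤ) :
    latticeCast (a + b - c) = latticeCast a + latticeCast b - latticeCast c := by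
  simp only [latticeCast, Prod.fst_add, Prod.snd_add, Prod.fst_sub, Prod.snd_sub, Int.cast_add,
    Int.cast_sub, Prod.mk_add_mk, Prod.mk_sub_mk]

lemma lineThrough_sub_eq_range_lineMap (a b : ℝ × ℝ) :
    lineThrough a (b - a) = range (lineMap a b : ℝ → ℝ × ℝ) := by
  ext z
  simp only [lineThrough, mem_ofPred_eq, mem_range, lineMap_apply_module', add_comm a, eq_comm]

lemma mem_lineThrough_of_mem_of_mem {w w' v z : ℝ × ℝ} (hz : z ∈ lineThrough w v)
    (hz' : z ∈ lineThrough w' v) : w ∈ lineThrough w' v := by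
  obtain ⟨s, rfl⟩ := hz
  obtain ⟨t, h⟩ := hz'
  exact ⟨t - s, by linear_combination (norm := module) h⟩

lemma lineMap_mem_segment_lineMap_iff {E : Type*} [AddCommGroup E] [Module ℝ E] {a b : E}
    (hab : a ≠ b) {s t u : ℝ} :
    lineMap a b u ∈ segment ℝ (lineMap a b s) (lineMap a b t) ↔ u ∈ uIcc s t := by
  rw [← image_segment, segment_eq_uIcc, (lineMap_injective ℝ hab).mem_set_image]

lemma segCross_of_sub_eq_smul {a b c e : ℝ × ℝ} {μ : ℝ} (hμ : 0 < μ)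
    (hbe : b - e = μ • (c - a)) (hab : a ≠ b) : SegCross a b c e := by
  -- the segments `a b` and `c e` meet where both are divided in the ratio `1 : μ`
  set l : ℝ := (1 + μ)⁻¹
  have hl : l ∈ Ioo (0 : ℝ) 1 := ⟨by positivity, inv_lt_one_of_one_lt₀ (by linarith)⟩
  have hlμ : l * (1 + μ) = 1 := inv_mul_cancel₀ (by linarith)
  have hx : lineMap a b l ∈ openSegment ℝ a b := lineMap_mem_openSegment ℝ a b hl
  refine ⟨lineMap a b l, openSegment_subset_segment _ _ _ hx, ?_, ?_⟩
  · have : lineMap a b l = lineMap c e l := by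
      simp only [lineMap_apply_module]
      linear_combination (norm := module) l • hbe - hlμ • (a - c)
    exact this ▸ segment_eq_image_lineMap ℝ c e ▸ mem_image_of_mem _ (Ioo_subset_Icc_self hl)
  · rintro ⟨hxab | hxab, -⟩
    · exact hab (left_mem_openSegment_iff.mp (hxab ▸ hx))
    · exact hab (right_mem_openSegment_iff.mp (hxab ▸ hx))

lemma eq_zero_half_one_of_visibility {S : Set ℝ} (h0 : 0 ∈ S) (h1 : 1 ∈ S)
    (hsymm : ∀ t ∈ S, 0 < t → t < 1 → 1 - t ∈ S)
    (hvis0 : ∀ t ∈ S, t ≠ 1 → ∀ u ∈ S, u ∈ uIcc 0 t → u = 0 ∨ u = t)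
    (hvis1 : ∀ t ∈ S, t ≠ 0 → ∀ u ∈ S, u ∈ uIcc 1 t → u = 1 ∨ u = t)
    (hmid : ∃ m ∈ S, 0 < m ∧ m < 1) : S = {0, 1 / 2, 1} := by
  have interior : ∀ t ∈ S, 0 < t → t < 1 → t = 1 / 2 := by
    intro t ht ht0 ht1
    wlog hle : t ≤ 1 / 2 generalizing t
    · linarith [this (1 - t) (hsymm t ht ht0 ht1) (by linarith) (by linarith) (by linarith)]
    have := hvis0 (1 - t) (hsymm t ht ht0 ht1) (by linarith) t ht
      (mem_uIcc.2 (.inl ⟨ht0.le, by linarith⟩))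
    rcases this with h | h <;> linarith
  obtain ⟨m, hm, hm0, hm1⟩ := hmid
  have hhalf : (1 / 2 : ℝ) ∈ S := interior m hm hm0 hm1 ▸ hm
  ext t
  refine ⟨fun ht => ?_, by rintro (rfl | rfl | rfl) <;> assumption⟩
  rcases lt_trichotomy t 0 with hneg | rfl | hpos
  · have := hvis1 t ht hneg.ne (1 / 2) hhalf (mem_uIcc.2 (.inr ⟨by linarith, by norm_num⟩))
    norm_num at this
    linarith
  · exact .inl rfl
  rcases lt_trichotomy t 1 with hlt | rfl | hgt
  · exact .inr (.inl (interior t ht hpos hlt))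
  · exact .inr (.inr rfl)
  · have := hvis0 t ht hgt.ne' (1 / 2) hhalf (mem_uIcc.2 (.inl ⟨by norm_num, by linarith⟩))
    norm_num at this
    linarith

lemma Visible.param_eq_or_eq {a b x : ℤ × ℤ} {c e : ℝ × ℝ} (hce : c ≠ e)
    (hab : Visible a b) {s t u : ℝ} (ha : latticeCast a = lineMap c e s)
    (hb : latticeCast b = lineMap c e t) (hx : latticeCast x = lineMap c e u)
    (hu : u ∈ uIcc s t) : u = s ∨ u = t := by
  have hxab := hab x (by rw [ha, hb, hx]; exact (lineMap_mem_segment_lineMap_iff hce).2 hu)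
  refine hxab.imp (fun h => ?_) (fun h => ?_) <;> subst h <;> apply lineMap_injective ℝ hce
  · rw [← hx, ha]
  · rw [← hx, hb]

/-- The lattice points of `P` on the line `p q`, in the affine coordinate with `p ↦ 0`,
`q ↦ 1`. -/
def lineParams (P : Set (ℝ × ℝ)) (p q : ℤ × ℤ) : Set ℝ :=
  {t | ∃ r : ℤ × ℤ, latticeCast r ∈ P ∧
    latticeCast r = lineMap (latticeCast p) (latticeCast q) t}

section lineParams

variable {P : Set (ℝ × ℝ)} {p q : ℤ × ℤ}

lemma zero_mem_lineParams (hpP : latticeCast p ∈ P) : (0 : ℝ) ∈ lineParams P p q :=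
  ⟨p, hpP, (lineMap_apply_zero _ _).symm⟩

lemma one_mem_lineParams (hqP : latticeCast q ∈ P) : (1 : ℝ) ∈ lineParams P p q :=
  ⟨q, hqP, (lineMap_apply_one _ _).symm⟩

/-- The point reflection of `r` in the midpoint of `p q` is the lattice point `p + q - r`. -/
lemma one_sub_mem_lineParams (hconv : Convex ℝ P) (hpP : latticeCast p ∈ P)
    (hqP : latticeCast q ∈ P) {t : ℝ} (ht : t ∈ lineParams P p q) (ht0 : 0 ≤ t)
    (ht1 : t ≤ 1) : 1 - t ∈ lineParams P p q := by
  obtain ⟨r, -, hr⟩ := ht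
  have hr' : latticeCast (p + q - r) = lineMap (latticeCast p) (latticeCast q) (1 - t) := by
    rw [latticeCast_add_sub, hr]
    simp only [lineMap_apply_module]
    module
  exact ⟨p + q - r, hr' ▸ hconv.lineMap_mem hpP hqP ⟨by linarith, by linarith⟩, hr'⟩

lemma exists_mem_lineParams_of_not_visible (hconv : Convex ℝ P) (hpP : latticeCast p ∈ P)
    (hqP : latticeCast q ∈ P) (hnotvis : ¬ Visible p q) :
    ∃ m ∈ lineParams P p q, 0 < m ∧ m < 1 := by
  simp only [Visible, not_forall, not_or] at hnotvis
  obtain ⟨x, hx, hxp, hxq⟩ := hnotvis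
  rw [segment_eq_image_lineMap] at hx
  obtain ⟨m, hm, hmx⟩ := hx
  refine ⟨m, ⟨x, hmx ▸ hconv.lineMap_mem hpP hqP hm, hmx.symm⟩,
    hm.1.lt_of_ne ?_, hm.2.lt_of_ne ?_⟩
  · rintro rfl
    exact hxp (latticeCast_injective (by rw [← hmx, lineMap_apply_zero]))
  · rintro rfl
    exact hxq (latticeCast_injective (by rw [← hmx, lineMap_apply_one]))

lemma lineParams_eq_or_eq_of_visible (hpq : p ≠ q) {a b : ℤ × ℤ} {s s' t u : ℝ}
    (ha : latticeCast a = lineMap (latticeCast p) (latticeCast q) s)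
    (hb : latticeCast b = lineMap (latticeCast p) (latticeCast q) s')
    (hvis : ∀ r, latticeCast r ∈ P → r ≠ b → Visible a r)
    (ht : t ∈ lineParams P p q) (hts' : t ≠ s') (hu : u ∈ lineParams P p q)
    (hut : u ∈ uIcc s t) :
    u = s ∨ u = t := by
  obtain ⟨r, hrP, hr⟩ := ht
  obtain ⟨x, -, hx⟩ := hu
  have hne : latticeCast p ≠ latticeCast q := latticeCast_injective.ne hpq
  refine (hvis r hrP ?_).param_eq_or_eq hne ha hr hx hut
  rintro rfl
  exact hts' (lineMap_injective ℝ hne (by rw [← hr, hb]))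

lemma lineParams_eq (hconv : Convex ℝ P) (hpq : p ≠ q) (hpP : latticeCast p ∈ P)
    (hqP : latticeCast q ∈ P) (hnotvis : ¬ Visible p q)
    (hvisp : ∀ r, latticeCast r ∈ P → r ≠ q → Visible p r)
    (hvisq : ∀ r, latticeCast r ∈ P → r ≠ p → Visible q r) :
    lineParams P p q = {0, 1 / 2, 1} := by
  have hp := (lineMap_apply_zero (k := ℝ) (latticeCast p) (latticeCast q)).symm
  have hq := (lineMap_apply_one (k := ℝ) (latticeCast p) (latticeCast q)).symm
  exact eq_zero_half_one_of_visibility (zero_mem_lineParams hpP) (one_mem_lineParams hqP)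
    (fun t ht ht0 ht1 => one_sub_mem_lineParams hconv hpP hqP ht ht0.le ht1.le)
    (fun t ht ht1 u hu hut => lineParams_eq_or_eq_of_visible hpq hp hq hvisp ht ht1 hu hut)
    (fun t ht ht0 u hu hut => lineParams_eq_or_eq_of_visible hpq hq hp hvisq ht ht0 hu hut)
    (exists_mem_lineParams_of_not_visible hconv hpP hqP hnotvis)

end lineParams

lemma ncard_latticePoints_lineThrough (P : Set (ℝ × ℝ)) {p q : ℤ × ℤ} (hpq : p ≠ q) :
    {r : ℤ × ℤ | latticeCast r ∈ P ∧
      latticeCast r ∈ lineThrough (latticeCast p) (latticeCast q - latticeCast p)}.ncard =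
    (lineParams P p q).ncard := by
  have hne : latticeCast p ≠ latticeCast q := latticeCast_injective.ne hpq
  rw [← ncard_image_of_injective _ latticeCast_injective,
    ← ncard_image_of_injective _ (lineMap_injective ℝ hne), lineThrough_sub_eq_range_lineMap]
  congr 1
  ext z
  constructor
  · rintro ⟨r, ⟨hrP, t, hrt⟩, rfl⟩
    exact ⟨t, ⟨r, hrP, hrt.symm⟩, hrt⟩
  · rintro ⟨t, ⟨r, hrP, hrt⟩, rfl⟩
    exact ⟨r, ⟨hrP, t, hrt.symm⟩, hrt⟩

lemma latticePoints_lineThrough_subsingleton {P : Set (ℝ × ℝ)} {p q : ℤ × ℤ}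
    (hnocross : ∀ r s : ℤ × ℤ, latticeCast r ∈ P → latticeCast s ∈ P → r ≠ q → s ≠ p →
      ¬ SegCross (latticeCast p) (latticeCast r) (latticeCast q) (latticeCast s))
    {w : ℝ × ℝ} (hw : w ∉ lineThrough (latticeCast p) (latticeCast q - latticeCast p)) :
    {r : ℤ × ℤ | latticeCast r ∈ P ∧
      latticeCast r ∈ lineThrough w (latticeCast q - latticeCast p)}.Subsingleton := by
  have hp : latticeCast p ∈ lineThrough (latticeCast p) (latticeCast q - latticeCast p) :=
    ⟨0, by simp⟩
  have hq : latticeCast q ∈ lineThrough (latticeCast p) (latticeCast q - latticeCast p) :=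
    ⟨1, by simp⟩
  have off_line : ∀ r, latticeCast r ∈ lineThrough w (latticeCast q - latticeCast p) →
      r ≠ p ∧ r ≠ q := fun r hr =>
    ⟨by rintro rfl; exact hw (mem_lineThrough_of_mem_of_mem hr hp),
      by rintro rfl; exact hw (mem_lineThrough_of_mem_of_mem hr hq)⟩
  rintro r ⟨hrP, t₁, hr⟩ s ⟨hsP, t₂, hs⟩
  wlog hle : t₁ ≤ t₂ generalizing r s t₁ t₂
  · exact (this hsP t₂ hs hrP t₁ hr (le_of_not_ge hle)).symm
  rcases hle.lt_or_eq with hlt | rfl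
  · exfalso
    refine hnocross s r hsP hrP (off_line s ⟨t₂, hs⟩).2 (off_line r ⟨t₁, hr⟩).1
      (segCross_of_sub_eq_smul (μ := t₂ - t₁) (by linarith) ?_ ?_)
    · rw [hs, hr]; module
    · exact latticeCast_injective.ne (off_line s ⟨t₂, hs⟩).1.symm
  · exact latticeCast_injective (hr.trans hs.symm)

theorem diploptigon_lines_general (V : Finset (ℤ × ℤ))
    (P : Set (ℝ × ℝ)) (hP : P = convexHull ℝ (latticeCast '' (V : Set (ℤ × ℤ))))
    (p q : ℤ × ℤ) (hpq : p ≠ q)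
    (hpP : latticeCast p ∈ P) (hqP : latticeCast q ∈ P)
    (hnotvis : ¬ Visible p q)
    (hvisp : ∀ r : ℤ × ℤ, latticeCast r ∈ P → r ≠ q → Visible p r)
    (hvisq : ∀ r : ℤ × ℤ, latticeCast r ∈ P → r ≠ p → Visible q r)
    (hnocross : ∀ r s : ℤ × ℤ, latticeCast r ∈ P → latticeCast s ∈ P → r ≠ q → s ≠ p →
      ¬ SegCross (latticeCast p) (latticeCast r) (latticeCast q) (latticeCast s)) :
    {r : ℤ × ℤ | latticeCast r ∈ P ∧
        latticeCast r ∈ lineThrough (latticeCast p) (latticeCast q - latticeCast p)}.ncard = 3 ∧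
    ∀ w : ℝ × ℝ, w ∉ lineThrough (latticeCast p) (latticeCast q - latticeCast p) →
      {r : ℤ × ℤ | latticeCast r ∈ P ∧
        latticeCast r ∈ lineThrough w (latticeCast q - latticeCast p)}.ncard ≤ 1 := by
  have hconv : Convex ℝ P := hP ▸ convex_convexHull ℝ _
  refine ⟨?_, fun w hw => ?_⟩
  · rw [ncard_latticePoints_lineThrough P hpq,
      lineParams_eq hconv hpq hpP hqP hnotvis hvisp hvisq, ncard_eq_three]
    exact ⟨0, 1 / 2, 1, by norm_num, by norm_num, by norm_num, rfl⟩
  · have hsub := latticePoints_lineThrough_subsingleton hnocross hw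
    exact (ncard_le_one hsub.finite).2 hsub

theorem diploptigon_lines (V : Finset (ℤ × ℤ))
    (P : Set (ℝ × ℝ)) (hP : P = convexHull ℝ (latticeCast '' (V : Set (ℤ × ℤ))))
    (h2dim : ¬ Collinear ℝ (latticeCast '' (V : Set (ℤ × ℤ))))
    (p q : ℤ × ℤ) (hpq : p ≠ q)
    (hpP : latticeCast p ∈ P) (hqP : latticeCast q ∈ P)
    (hnotvis : ¬ Visible p q)
    (hvisp : ∀ r : ℤ × ℤ, latticeCast r ∈ P → r ≠ q → Visible p r)
    (hvisq : ∀ r : ℤ × ℤ, latticeCast r ∈ P → r ≠ p → Visible q r)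
    (hnocross : ∀ r s : ℤ × ℤ, latticeCast r ∈ P → latticeCast s ∈ P → r ≠ q → s ≠ p →
      ¬ SegCross (latticeCast p) (latticeCast r) (latticeCast q) (latticeCast s)) :
    {r : ℤ × ℤ | latticeCast r ∈ P ∧
        latticeCast r ∈ lineThrough (latticeCast p) (latticeCast q - latticeCast p)}.ncard = 3 ∧
    ∀ w : ℝ × ℝ, w ∉ lineThrough (latticeCast p) (latticeCast q - latticeCast p) →
      {r : ℤ × ℤ | latticeCast r ∈ P ∧
        latticeCast r ∈ lineThrough w (latticeCast q - latticeCast p)}.ncard ≤ 1 :=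
  diploptigon_lines_general V P hP p q hpq hpP hqP hnotvis hvisp hvisq hnocross
end

section
/- Let P be the quadrilateral (possibly degenerate to a triangle) with vertices (0,0), (0,-2), (x₁,-1), (x₂,-1) where x₁ ≤ 0 ≤ x₂ are integers with x₂ - x₁ ≥ 3. Then P is a diploptigon with diploptigon points (0,0) and (0,-2): these two points are not visible to each other, every other lattice point of P is visible from both, and no lines of sight cross. -/
lemma seg_mem_iff (p q x : ℝ × ℝ) :
    x ∈ segment ℝ p q ↔ ∃ t : ℝ, 0 ≤ t ∧ t ≤ 1 ∧
      x.1 = (1-t)*p.1 + t*q.1 ∧ x.2 = (1-t)*p.2 + t*q.2 := by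
  rw [segment_eq_image]
  constructor
  · rintro ⟨t, ⟨ht0, ht1⟩, rfl⟩
    exact ⟨t, ht0, ht1, by simp [smul_eq_mul], by simp [smul_eq_mul]⟩
  · rintro ⟨t, ht0, ht1, hx1, hx2⟩
    exact ⟨t, ⟨ht0, ht1⟩, by ext <;> simp [smul_eq_mul, hx1, hx2]⟩

lemma vis_top (a : ℤ) : Visible (0, 0) (a, -1) := by
  intro r hr
  rw [seg_mem_iff] at hr
  obtain ⟨t, ht0, ht1, hx1, hx2⟩ := hr
  simp only [latticeCast] at hx1 hx2
  push_cast at hx1 hx2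
  -- hx2 : (r.2 : ℝ) = -t
  have h2 : (r.2 : ℝ) = -t := by linarith [hx2]
  have hr2 : r.2 = 0 ∨ r.2 = -1 := by
    have hlo : (-1 : ℝ) ≤ (r.2 : ℝ) := by rw [h2]; linarith
    have hhi : (r.2 : ℝ) ≤ 0 := by rw [h2]; linarith
    have hlo' : (-1 : ℤ) ≤ r.2 := by exact_mod_cast hlo
    have hhi' : r.2 ≤ 0 := by exact_mod_cast hhi
    omega
  rcases hr2 with h | h
  · left
    have ht : t = 0 := by rw [h] at h2; push_cast at h2; linarith
    have : (r.1 : ℝ) = 0 := by rw [ht] at hx1; linarith [hx1]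
    have : r.1 = 0 := by exact_mod_cast this
    exact Prod.ext this h
  · right
    have ht : t = 1 := by rw [h] at h2; push_cast at h2; linarith
    have : (r.1 : ℝ) = (a : ℝ) := by rw [ht] at hx1; linarith [hx1]
    have : r.1 = a := by exact_mod_cast this
    exact Prod.ext this h

lemma vis_bot (a : ℤ) : Visible (0, -2) (a, -1) := by
  intro r hr
  rw [seg_mem_iff] at hr
  obtain ⟨t, ht0, ht1, hx1, hx2⟩ := hr
  simp only [latticeCast] at hx1 hx2
  push_cast at hx1 hx2
  have h2 : (r.2 : ℝ) = -2 + t := by linarith [hx2]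
  have hr2 : r.2 = -2 ∨ r.2 = -1 := by
    have hlo : (-2 : ℝ) ≤ (r.2 : ℝ) := by rw [h2]; linarith
    have hhi : (r.2 : ℝ) ≤ -1 := by rw [h2]; linarith
    have hlo' : (-2 : ℤ) ≤ r.2 := by exact_mod_cast hlo
    have hhi' : r.2 ≤ -1 := by exact_mod_cast hhi
    omega
  rcases hr2 with h | h
  · left
    have ht : t = 0 := by rw [h] at h2; push_cast at h2; linarith
    have : (r.1 : ℝ) = 0 := by rw [ht] at hx1; linarith [hx1]
    have : r.1 = 0 := by exact_mod_cast this
    exact Prod.ext this h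
  · right
    have ht : t = 1 := by rw [h] at h2; push_cast at h2; linarith
    have : (r.1 : ℝ) = (a : ℝ) := by rw [ht] at hx1; linarith [hx1]
    have : r.1 = a := by exact_mod_cast this
    exact Prod.ext this h

theorem quadrilateral_is_diploptigon (x₁ x₂ : ℤ) (h₁ : x₁ ≤ 0) (h₂ : 0 ≤ x₂)
    (hwide : x₂ - x₁ ≥ 3)
    (P : Set (ℝ × ℝ))
    (hP : P = convexHull ℝ ({latticeCast (0, 0), latticeCast (0, -2),
      latticeCast (x₁, -1), latticeCast (x₂, -1)} : Set (ℝ × ℝ))) :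
    ¬ Visible (0, 0) (0, -2) ∧
    (∀ r : ℤ × ℤ, latticeCast r ∈ P → r ≠ (0, 0) → r ≠ (0, -2) →
      Visible (0, 0) r ∧ Visible (0, -2) r) ∧
    (∀ r s : ℤ × ℤ, latticeCast r ∈ P → latticeCast s ∈ P → r ≠ (0, -2) → s ≠ (0, 0) →
      ¬ SegCross (latticeCast (0, 0)) (latticeCast r)
        (latticeCast (0, -2)) (latticeCast s)) := by
  -- characterization of lattice points of P
  have key : ∀ r : ℤ × ℤ, latticeCast r ∈ P → r = (0, 0) ∨ r.2 = -1 ∨ r = (0, -2) := by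
    intro r hr
    set C : Set (ℝ × ℝ) := {p | p.1 + (x₂:ℝ) * p.2 ≤ 0 ∧ (x₁:ℝ) * (-p.2) ≤ p.1 ∧
      p.1 ≤ (x₂:ℝ) * (p.2 + 2) ∧ (x₁:ℝ) * (p.2 + 2) ≤ p.1 ∧ -2 ≤ p.2 ∧ p.2 ≤ 0} with hC
    have hconv : Convex ℝ C := by
      intro p hp q hq a b ha hb hab
      simp only [hC, Set.mem_setOf_eq, Prod.fst_add, Prod.snd_add, Prod.smul_fst,
        Prod.smul_snd, smul_eq_mul] at hp hq ⊢
      obtain ⟨hp1, hp2, hp3, hp4, hp5, hp6⟩ := hp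
      obtain ⟨hq1, hq2, hq3, hq4, hq5, hq6⟩ := hq
      have e1 : (x₁:ℝ) * (a + b) = (x₁:ℝ) := by rw [hab, mul_one]
      have e2 : (x₂:ℝ) * (a + b) = (x₂:ℝ) := by rw [hab, mul_one]
      refine ⟨?_, ?_, ?_, ?_, by nlinarith, by nlinarith⟩
      · nlinarith [mul_le_mul_of_nonneg_left hp1 ha, mul_le_mul_of_nonneg_left hq1 hb]
      · nlinarith [mul_le_mul_of_nonneg_left hp2 ha, mul_le_mul_of_nonneg_left hq2 hb]
      · nlinarith [mul_le_mul_of_nonneg_left hp3 ha, mul_le_mul_of_nonneg_left hq3 hb, e2]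
      · nlinarith [mul_le_mul_of_nonneg_left hp4 ha, mul_le_mul_of_nonneg_left hq4 hb, e1]
    have hsub : P ⊆ C := by
      rw [hP]
      apply convexHull_min _ hconv
      intro p hp
      have hx1R : (x₁ : ℝ) ≤ 0 := by exact_mod_cast h₁
      have hx2R : (0:ℝ) ≤ (x₂ : ℝ) := by exact_mod_cast h₂
      have hx12 : (x₁ : ℝ) ≤ (x₂ : ℝ) := by linarith
      simp only [Set.mem_insert_iff, Set.mem_singleton_iff, latticeCast] at hp
      rcases hp with h | h | h | h <;> subst h <;>
        simp only [hC, Set.mem_setOf_eq] <;> push_cast <;>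
        refine ⟨by nlinarith, by nlinarith, by nlinarith, by nlinarith, by nlinarith, by nlinarith⟩
    have hc := hsub hr
    simp only [hC, Set.mem_setOf_eq, latticeCast] at hc
    obtain ⟨hc1, hc2, hc3, hc4, hc5, hc6⟩ := hc
    have h5 : (-2 : ℤ) ≤ r.2 := by exact_mod_cast hc5
    have h6 : r.2 ≤ 0 := by exact_mod_cast hc6
    have hcase : r.2 = 0 ∨ r.2 = -1 ∨ r.2 = -2 := by omega
    rcases hcase with h | h | h
    · left
      have e : (r.2 : ℝ) = 0 := by exact_mod_cast h
      rw [e] at hc1 hc2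
      have : (r.1 : ℝ) = 0 := by nlinarith
      have : r.1 = 0 := by exact_mod_cast this
      exact Prod.ext this h
    · right; left; exact h
    · right; right
      have e : (r.2 : ℝ) = -2 := by exact_mod_cast h
      rw [e] at hc3 hc4
      have : (r.1 : ℝ) = 0 := by nlinarith
      have : r.1 = 0 := by exact_mod_cast this
      exact Prod.ext this h
  refine ⟨?_, ?_, ?_⟩
  · intro hv
    have hmem : latticeCast (0, -1) ∈ segment ℝ (latticeCast (0, 0)) (latticeCast (0, -2)) := by
      rw [seg_mem_iff]
      refine ⟨1/2, by norm_num, by norm_num, ?_, ?_⟩ <;> norm_num [latticeCast]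
    rcases hv _ hmem with h | h <;> exact absurd h (by decide)
  · intro r hr hne1 hne2
    rcases key r hr with h | h | h
    · exact absurd h hne1
    · have : r = (r.1, -1) := by rw [← h]
      rw [this]
      exact ⟨vis_top r.1, vis_bot r.1⟩
    · exact absurd h hne2
  · intro r s hrP hsP hrne hsne hcross
    obtain ⟨x, hxr, hxs, hnot⟩ := hcross
    rw [seg_mem_iff] at hxr hxs
    obtain ⟨t, ht0, ht1, hxa, hxb⟩ := hxr
    obtain ⟨u, hu0, hu1, hxc, hxd⟩ := hxs
    simp only [latticeCast] at hxa hxb hxc hxd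
    push_cast at hxa hxb hxc hxd
    -- r.2 ∈ {0, -1}, s.2 ∈ {-1, -2}
    have hr2 : r.2 = 0 ∨ r.2 = -1 := by
      rcases key r hrP with h | h | h
      · left; rw [h]
      · right; exact h
      · exact absurd h hrne
    have hs2 : s.2 = -1 ∨ s.2 = -2 := by
      rcases key s hsP with h | h | h
      · exact absurd h hsne
      · left; exact h
      · right; rw [h]
    -- x.2 = t * r.2 ≥ -1, x.2 = -2 + u*(s.2+2) ≤ -1
    have hb' : x.2 = t * (r.2 : ℝ) := by linarith [hxb]
    have hd' : x.2 = -2*(1-u) + u * (s.2 : ℝ) := by linarith [hxd]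
    have hr2R : (r.2 : ℝ) = 0 ∨ (r.2 : ℝ) = -1 := by
      rcases hr2 with h | h
      · left; exact_mod_cast h
      · right; exact_mod_cast h
    have hs2R : (s.2 : ℝ) = -1 ∨ (s.2 : ℝ) = -2 := by
      rcases hs2 with h | h
      · left; exact_mod_cast h
      · right; exact_mod_cast h
    have hge : -1 ≤ x.2 := by rcases hr2R with h | h <;> rw [hb', h] <;> nlinarith
    have hle : x.2 ≤ -1 := by rcases hs2R with h | h <;> rw [hd', h] <;> nlinarith
    have hx2 : x.2 = -1 := le_antisymm hle hge
    -- force r.2 = -1, t = 1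
    have hr2' : (r.2 : ℝ) = -1 := by
      rcases hr2R with h | h
      · exfalso; rw [hb', h] at hx2; norm_num at hx2
      · exact h
    have ht : t = 1 := by rw [hb', hr2'] at hx2; linarith
    have hs2' : (s.2 : ℝ) = -1 := by
      rcases hs2R with h | h
      · exact h
      · exfalso; rw [hd', h] at hx2; nlinarith
    have hu : u = 1 := by rw [hd', hs2'] at hx2; linarith
    apply hnot
    constructor
    · right
      rw [ht] at hxa
      have e1 : x.1 = (r.1 : ℝ) := by linarith [hxa]
      have e2 : x.2 = (r.2 : ℝ) := by rw [hx2, hr2']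
      exact Prod.ext e1 e2
    · right
      rw [hu] at hxc
      have e1 : x.1 = (s.1 : ℝ) := by linarith [hxc]
      have e2 : x.2 = (s.2 : ℝ) := by rw [hx2, hs2']
      exact Prod.ext e1 e2
end

section
/- The lattice points of the quadrilateral with vertices (0,0), (0,-2), (x₁,-1), (x₂,-1) (x₁ ≤ 0 ≤ x₂ integers) are exactly (0,0), (0,-2), and (x,-1) for each integer x with x₁ ≤ x ≤ x₂. -/
open Set

noncomputable def quadrilateralVertices (x₁ x₂ : ℤ) : Set (ℝ × ℝ) :=
  {latticeCast (0, 0), latticeCast (0, -2), latticeCast (x₁, -1), latticeCast (x₂, -1)}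

theorem le_of_mem_convexHull_of_forall_le {𝕜 : Type*} [Field 𝕜] [LinearOrder 𝕜]
    [IsStrictOrderedRing 𝕜] {s : Set (𝕜 × 𝕜)} {a b c : 𝕜}
    (hs : ∀ q ∈ s, a * q.1 + b * q.2 ≤ c) {p : 𝕜 × 𝕜} (hp : p ∈ convexHull 𝕜 s) :
    a * p.1 + b * p.2 ≤ c := by
  have hlin : IsLinearMap 𝕜 fun q : 𝕜 × 𝕜 => a * q.1 + b * q.2 :=
    ⟨fun q q' => by simp only [Prod.fst_add, Prod.snd_add]; ring,
     fun k q => by simp only [Prod.smul_fst, Prod.smul_snd, smul_eq_mul]; ring⟩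
  exact convexHull_min hs (convex_halfSpace_le hlin c) hp

theorem int_le_of_latticeCast_mem_convexHull {s : Set (ℝ × ℝ)} {a b c : ℤ}
    (hs : ∀ q ∈ s, (a : ℝ) * q.1 + b * q.2 ≤ c) {r : ℤ × ℤ}
    (hr : latticeCast r ∈ convexHull ℝ s) : a * r.1 + b * r.2 ≤ c := by
  have h := le_of_mem_convexHull_of_forall_le hs hr
  simp only [latticeCast] at h
  exact_mod_cast h

theorem latticePoint_of_mem_convexHull_quadrilateralVertices {x₁ x₂ : ℤ} (h₁ : x₁ ≤ 0)
    (h₂ : 0 ≤ x₂) {r : ℤ × ℤ}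
    (hr : latticeCast r ∈ convexHull ℝ (quadrilateralVertices x₁ x₂)) :
    r = (0, 0) ∨ r = (0, -2) ∨ (r.2 = -1 ∧ x₁ ≤ r.1 ∧ r.1 ≤ x₂) := by
  have h₁' : (x₁ : ℝ) ≤ 0 := by exact_mod_cast h₁
  have h₂' : (0 : ℝ) ≤ x₂ := by exact_mod_cast h₂
  have edge {a b c : ℤ} (hs : ∀ q ∈ quadrilateralVertices x₁ x₂, (a : ℝ) * q.1 + b * q.2 ≤ c) :
      a * r.1 + b * r.2 ≤ c :=
    int_le_of_latticeCast_mem_convexHull hs hr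
  simp only [quadrilateralVertices, mem_insert_iff, mem_singleton_iff, forall_eq_or_imp,
    forall_eq, latticeCast] at edge
  have upperRight := @edge 1 x₂ 0 (by push_cast; and_intros <;> linarith)
  have upperLeft := @edge (-1) (-x₁) 0 (by push_cast; and_intros <;> linarith)
  have lowerRight := @edge 1 (-x₂) (2 * x₂) (by push_cast; and_intros <;> linarith)
  have lowerLeft := @edge (-1) x₁ (-2 * x₁) (by push_cast; and_intros <;> linarith)
  have top := @edge 0 1 0 (by push_cast; and_intros <;> linarith)
  have bottom := @edge 0 (-1) 2 (by push_cast; and_intros <;> linarith)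
  obtain ⟨m, n⟩ := r
  simp only [Prod.mk.injEq] at *
  have hn : n = 0 ∨ n = -1 ∨ n = -2 := by omega
  rcases hn with rfl | rfl | rfl <;> omega

theorem latticeCast_mem_convexHull_quadrilateralVertices_of_row {x₁ x₂ m : ℤ} (hl : x₁ ≤ m)
    (hr : m ≤ x₂) : latticeCast (m, -1) ∈ convexHull ℝ (quadrilateralVertices x₁ x₂) := by
  have hseg : segment ℝ (latticeCast (x₁, -1)) (latticeCast (x₂, -1)) ⊆
      convexHull ℝ (quadrilateralVertices x₁ x₂) :=
    segment_subset_convexHull (by simp [quadrilateralVertices]) (by simp [quadrilateralVertices])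
  apply hseg
  rw [latticeCast, latticeCast, ← Prod.image_mk_segment_left,
    segment_eq_Icc (by exact_mod_cast hl.trans hr)]
  exact ⟨m, ⟨by exact_mod_cast hl, by exact_mod_cast hr⟩, rfl⟩

theorem quadrilateral_lattice_points (x₁ x₂ : ℤ) (h₁ : x₁ ≤ 0) (h₂ : 0 ≤ x₂)
    (P : Set (ℝ × ℝ))
    (hP : P = convexHull ℝ ({latticeCast (0, 0), latticeCast (0, -2),
      latticeCast (x₁, -1), latticeCast (x₂, -1)} : Set (ℝ × ℝ))) :
    ∀ r : ℤ × ℤ, latticeCast r ∈ P ↔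
      (r = (0, 0) ∨ r = (0, -2) ∨ (r.2 = -1 ∧ x₁ ≤ r.1 ∧ r.1 ≤ x₂)) := by
  rintro ⟨m, n⟩
  rw [hP, ← quadrilateralVertices]
  refine ⟨latticePoint_of_mem_convexHull_quadrilateralVertices h₁ h₂, ?_⟩
  rintro (h | h | ⟨rfl, hl, hr⟩)
  · exact subset_convexHull ℝ _ (by simp [quadrilateralVertices, h])
  · exact subset_convexHull ℝ _ (by simp [quadrilateralVertices, h])
  · exact latticeCast_mem_convexHull_quadrilateralVertices_of_row hl hr
end

section
/- Suppose p = (0,0) and q = (c,d) are lattice points with d ≤ -2, q is not visible from p, and there are lattice points (a,-1), (a+1,-1), (a+2,-1), (a+3,-1) all visible from both p and q in the convex hull of {p, q, (a,-1), (a+3,-1)}. If additionally no segment from p to one of these four points crosses a segment from q to one of them, and d is constrained so that the analogous four-in-a-row visibility argument applies from q, then d = -2 and c is even. -/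
/-
If `q = (c, d)` is not visible from the origin, then `q = k • v` with `k ≥ 2`. Since `v` lies
in `H` and must be visible from `q`, while `(k - 1) • v` lies strictly between them when `k ≥ 3`,
we get `k = 2`, so `c` and `d` are even. If `d ≤ -4`, the triangle with apex `q` over the base
`[(a, -1), (a + 3, -1)]` has width `3 (d + 2) / (d + 1) ≥ 2` at height `-2`, hence contains a
lattice point `(c + 2n, -2)`; its difference with `q` is `2 • (n, -1 - d / 2)`, so it is not
visible from `q`. Hence `d = -2`.
-/

@[simp]
lemma latticeCast_add (p q : ℤ × ℤ) : latticeCast (p + q) = latticeCast p + latticeCast q := by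
  simp [latticeCast]

@[simp]
lemma latticeCast_zsmul (k : ℤ) (p : ℤ × ℤ) : latticeCast (k • p) = (k : ℝ) • latticeCast p := by
  simp [latticeCast]

lemma latticeCast_add_mem_segment (p v : ℤ × ℤ) {k : ℤ} (hk : 1 ≤ k) :
    latticeCast (p + v) ∈ segment ℝ (latticeCast p) (latticeCast (p + k • v)) := by
  have hk' : (1 : ℝ) ≤ k := by exact_mod_cast hk
  rw [segment_eq_image']
  refine ⟨1 / k, ⟨by positivity, div_le_one_of_le₀ hk' (by positivity)⟩, ?_⟩
  simp only [latticeCast_add, latticeCast_zsmul, add_sub_cancel_left, smul_smul]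
  rw [one_div_mul_cancel (by positivity), one_smul]

lemma not_visible_add_smul (p : ℤ × ℤ) {v : ℤ × ℤ} (hv : v ≠ 0) {k : ℤ} (hk : 2 ≤ k) :
    ¬ Visible p (p + k • v) := by
  intro h
  rcases h (p + v) (latticeCast_add_mem_segment p v (by omega)) with h | h
  · exact hv (by simpa using h)
  · have hkv : k • v = v := (add_left_cancel h).symm
    have : (k - 1) • v = 0 := by rw [sub_smul, one_smul, hkv, sub_self]
    exact hv ((smul_eq_zero.mp this).resolve_left (by omega))

lemma visible_zero_of_gcd_eq_one {c d : ℤ} (h : Int.gcd c d = 1) : Visible (0, 0) (c, d) := by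
  intro r hr
  rw [segment_eq_image'] at hr
  obtain ⟨t, ⟨ht0, ht1⟩, hrt⟩ := hr
  have hx : (r.1 : ℝ) = t * c := by simpa [latticeCast] using (congrArg Prod.fst hrt).symm
  have hy : (r.2 : ℝ) = t * d := by simpa [latticeCast] using (congrArg Prod.snd hrt).symm
  -- Bézout: `t = t * (c A + d B)` is the integer `r.1 A + r.2 B`.
  set m := r.1 * c.gcdA d + r.2 * c.gcdB d
  have htm : t = m := by
    have hbez : (c : ℝ) * c.gcdA d + d * c.gcdB d = 1 := by
      exact_mod_cast (Int.gcd_eq_gcd_ab c d).symm.trans (by rw [h]; rfl)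
    simp only [m, Int.cast_add, Int.cast_mul, hx, hy]
    linear_combination t * hbez.symm
  rw [htm] at ht0 ht1 hx hy
  have hm : m = 0 ∨ m = 1 := by
    have : (0 : ℤ) ≤ m := by exact_mod_cast ht0
    have : m ≤ 1 := by exact_mod_cast ht1
    omega
  rcases hm with hm | hm
  · left; ext <;> simp only [hm, Int.cast_zero, zero_mul, Int.cast_eq_zero] at hx hy <;> assumption
  · right; ext <;> simp only [hm, Int.cast_one, one_mul, Int.cast_inj] at hx hy <;> assumption

lemma exists_add_two_mul_mem_Icc (c : ℤ) {x y : ℝ} (h : x + 2 ≤ y) :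
    ∃ n : ℤ, x ≤ c + 2 * n ∧ (c + 2 * n : ℝ) ≤ y := by
  refine ⟨⌈(x - c) / 2⌉, ?_, ?_⟩
  · linarith [Int.le_ceil ((x - c) / 2)]
  · linarith [Int.ceil_lt_add_one ((x - c) / 2)]

lemma exists_latticeCast_mem_at_height_neg_two {S : Set (ℝ × ℝ)} (hS : Convex ℝ S)
    {c d a : ℤ} (hd : d ≤ -4) (hq : latticeCast (c, d) ∈ S) (ha : latticeCast (a, -1) ∈ S)
    (hb : latticeCast (a + 3, -1) ∈ S) : ∃ n : ℤ, latticeCast (c + 2 * n, -2) ∈ S := by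
  have hd' : (d : ℝ) ≤ -4 := by exact_mod_cast hd
  -- moving from `(c, d)` towards height `-1` by the fraction `s` reaches height `-2`
  set s : ℝ := (d + 2) / (d + 1)
  have hs0 : 0 < s := div_pos_of_neg_of_neg (by linarith) (by linarith)
  have hs1 : s ≤ 1 := (div_le_one_of_neg (by linarith)).mpr (by linarith)
  have hs2 : 2 ≤ 3 * s := by
    rw [← mul_div_assoc, le_div_iff_of_neg (by linarith)]
    linarith
  obtain ⟨n, hn1, hn2⟩ := exists_add_two_mul_mem_Icc c
    (x := c + s * (a - c)) (y := c + s * (a - c) + 3 * s) (by linarith)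
  set τ : ℝ := (2 * n / s - (a - c)) / 3
  have hτ : τ ∈ Set.Icc (0 : ℝ) 1 := by
    constructor
    · have : (a - c : ℝ) ≤ 2 * n / s := by rw [le_div_iff₀ hs0]; linarith
      simp only [τ]; linarith
    · have : 2 * n / s ≤ (a - c + 3 : ℝ) := by rw [div_le_iff₀ hs0]; linarith
      simp only [τ]; linarith
  have hX := hS.add_smul_sub_mem hq (hS.add_smul_sub_mem ha hb hτ) ⟨hs0.le, hs1⟩
  refine ⟨n, ?_⟩
  convert hX using 1
  have hd1 : (d : ℝ) + 1 ≠ 0 := by linarith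
  have hd2 : (d : ℝ) + 2 ≠ 0 := by linarith
  simp only [latticeCast, Prod.ext_iff, Prod.fst_add, Prod.snd_add, Prod.fst_sub, Prod.snd_sub,
    Prod.smul_fst, Prod.smul_snd, smul_eq_mul, τ, s]
  push_cast
  constructor
  · field_simp
    ring
  · field_simp
    ring

lemma exists_eq_smul_of_not_visible_zero {c d : ℤ} (h : ¬ Visible (0, 0) (c, d)) :
    ∃ k : ℤ, 2 ≤ k ∧ ∃ v : ℤ × ℤ, v ≠ 0 ∧ (c, d) = k • v := by
  have hg1 : Int.gcd c d ≠ 1 := fun h1 => h (visible_zero_of_gcd_eq_one h1)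
  have hg0 : Int.gcd c d ≠ 0 := by
    intro h0
    obtain ⟨rfl, rfl⟩ := Int.gcd_eq_zero_iff.mp h0
    refine h fun r hr => Or.inl ?_
    simp only [segment_same, Set.mem_singleton_iff, latticeCast, Prod.ext_iff] at hr
    exact Prod.ext (by exact_mod_cast hr.1) (by exact_mod_cast hr.2)
  obtain ⟨u, hu⟩ := Int.gcd_dvd_left c d
  obtain ⟨w, hw⟩ := Int.gcd_dvd_right c d
  refine ⟨Int.gcd c d, by omega, (u, w), ?_, by ext <;> simp [← hu, ← hw]⟩
  intro huw
  obtain ⟨rfl, rfl⟩ := Prod.mk_eq_zero.mp huw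
  rw [mul_zero] at hu hw
  exact hg0 (Int.gcd_eq_zero_iff.mpr ⟨hu, hw⟩)

lemma eq_two_of_forall_visible {S : Set (ℝ × ℝ)} (hS : Convex ℝ S) {p v : ℤ × ℤ} (hv : v ≠ 0)
    {k : ℤ} (hk : 2 ≤ k) (hp : latticeCast p ∈ S) (hq : latticeCast (p + k • v) ∈ S)
    (hvis : ∀ r, latticeCast r ∈ S → r ≠ p → Visible (p + k • v) r) : k = 2 := by
  by_contra hk2
  have hvS : latticeCast (p + v) ∈ S :=
    hS.segment_subset hp hq (latticeCast_add_mem_segment p v (by omega))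
  have hpv : p + v = p + k • v + (k - 1) • -v := by
    rw [smul_neg, sub_smul, one_smul]; abel
  apply not_visible_add_smul (p + k • v) (neg_ne_zero.mpr hv) (show 2 ≤ k - 1 by omega)
  rw [← hpv]
  exact hvis _ hvS (by simpa using hv)

theorem second_diploptigon_point_general (c d a : ℤ) (hd : d ≤ -2)
    (hnotvis : ¬ Visible (0, 0) (c, d))
    (H : Set (ℝ × ℝ))
    (hH : H = convexHull ℝ ({latticeCast (0, 0), latticeCast (c, d),
      latticeCast (a, -1), latticeCast (a + 3, -1)} : Set (ℝ × ℝ)))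
    -- the analogous visibility argument applies from q: every lattice point of H
    -- other than p = (0,0) is visible from q
    (hq : ∀ r : ℤ × ℤ, latticeCast r ∈ H → r ≠ (0, 0) → Visible (c, d) r) :
    d = -2 ∧ Even c := by
  have hconv : Convex ℝ H := hH ▸ convex_convexHull ℝ _
  have hpH : latticeCast (0, 0) ∈ H := hH ▸ subset_convexHull ℝ _ (by simp)
  have hqH : latticeCast (c, d) ∈ H := hH ▸ subset_convexHull ℝ _ (by simp)
  have haH : latticeCast (a, -1) ∈ H := hH ▸ subset_convexHull ℝ _ (by simp)
  have hbH : latticeCast (a + 3, -1) ∈ H := hH ▸ subset_convexHull ℝ _ (by simp)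
  obtain ⟨k, hk, v, hv, hcd⟩ := exists_eq_smul_of_not_visible_zero hnotvis
  have hcd' : (c, d) = (0, 0) + k • v := by rw [hcd]; exact (zero_add _).symm
  obtain rfl : k = 2 :=
    eq_two_of_forall_visible hconv hv hk hpH (hcd' ▸ hqH) (hcd' ▸ hq)
  obtain ⟨hc, hd'⟩ : c = 2 * v.1 ∧ d = 2 * v.2 := by simpa [Prod.ext_iff] using hcd
  refine ⟨?_, ⟨v.1, by omega⟩⟩
  by_contra hne
  obtain ⟨n, hn⟩ := exists_latticeCast_mem_at_height_neg_two hconv (by omega) hqH haH hbH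
  apply not_visible_add_smul (c, d) (v := (n, -1 - v.2))
    (by rw [Ne, Prod.mk_eq_zero]; omega) le_rfl
  have hr : (c, d) + (2 : ℤ) • (n, -1 - v.2) = (c + 2 * n, -2) := by
    simp only [Prod.smul_mk, smul_eq_mul, Prod.mk_add_mk, Prod.mk.injEq, true_and]
    omega
  rw [hr]
  exact hq _ hn (by simp)

theorem second_diploptigon_point (c d a : ℤ) (hd : d ≤ -2)
    (hnotvis : ¬ Visible (0, 0) (c, d))
    (H : Set (ℝ × ℝ))
    (hH : H = convexHull ℝ ({latticeCast (0, 0), latticeCast (c, d),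
      latticeCast (a, -1), latticeCast (a + 3, -1)} : Set (ℝ × ℝ)))
    (hin : ∀ i : Fin 4, latticeCast (a + (i : ℤ), -1) ∈ H)
    (hvisp : ∀ i : Fin 4, Visible (0, 0) (a + (i : ℤ), -1))
    (hvisq : ∀ i : Fin 4, Visible (c, d) (a + (i : ℤ), -1))
    (hnocross : ∀ i j : Fin 4,
      ¬ SegCross (latticeCast (0, 0)) (latticeCast (a + (i : ℤ), -1))
        (latticeCast (c, d)) (latticeCast (a + (j : ℤ), -1)))
    -- the analogous visibility argument applies from q: every lattice point of H
    -- other than p = (0,0) is visible from q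
    (hq : ∀ r : ℤ × ℤ, latticeCast r ∈ H → r ≠ (0, 0) → Visible (c, d) r) :
    d = -2 ∧ Even c :=
  second_diploptigon_point_general c d a hd hnotvis H hH hq
end
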